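/- arXiv:2311.13604 — 4 statements merged into one kernel-verified Lean document; each statement's English description precedes it below -/
import Mathlib

section
/- For every integer n ≥ 0 and real θ with sin θ ≠ 0, 2^{2n} cos^{2n}(θ) = ∑_{k=0}^{n} ((2k + 1)/(2n + 1)) C(2n+1, n-k) · sin((2k+1)θ)/sin(θ). -/
open Real Finset

noncomputable def bcoef (n k : ℕ) : ℝ :=
  (Nat.choose (2*n) (n+k) : ℝ) - (Nat.choose (2*n) (n+k+1) : ℝ)

lemma bcoef_zero (n j : ℕ) (h : n < j) : bcoef n j = 0 := by
  unfold bcoef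
  rw [Nat.choose_eq_zero_of_lt (by omega), Nat.choose_eq_zero_of_lt (by omega)]
  simp

lemma chh (m j : ℕ) : ((m+2).choose (j+2) : ℝ)
    = (m.choose j : ℝ) + 2*(m.choose (j+1) : ℝ) + (m.choose (j+2) : ℝ) := by
  rw [show m+2 = (m+1)+1 from rfl, show j+2 = (j+1)+1 from rfl,
    Nat.choose_succ_succ' (m+1) (j+1), Nat.choose_succ_succ' m j,
    Nat.choose_succ_succ' m (j+1)]
  push_cast
  ring

lemma bcoef_pascal (n k : ℕ) :
    bcoef (n+1) (k+1) = bcoef n k + 2 * bcoef n (k+1) + bcoef n (k+2) := by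
  unfold bcoef
  rw [show 2*(n+1) = 2*n+2 by ring, show (n+1)+(k+1) = (n+k)+2 by ring]
  rw [show (n+k)+2+1 = (n+k+1)+2 by ring, chh, chh]
  rw [show n+(k+1) = n+k+1 by ring, show n+(k+2) = n+k+2 by ring]
  rw [show (n+k)+1 = n+k+1 by rfl, show (n+k)+2 = n+k+2 by rfl,
    show (n+k+1)+1 = n+k+2 by ring, show (n+k+1)+2 = n+k+3 by ring,
    show n+k+1+1 = n+k+2 by ring, show n+k+2+1 = n+k+3 by ring]
  ring

lemma bcoef_pascal_zero (n : ℕ) :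
    bcoef (n+1) 0 = bcoef n 0 + bcoef n 1 := by
  unfold bcoef
  have hsym : Nat.choose (2*n+1) n = Nat.choose (2*n+1) (n+1) := by
    rw [← Nat.choose_symm (by omega : n+1 ≤ 2*n+1)]
    congr 1; omega
  rw [show 2*(n+1) = (2*n+1)+1 by ring, show (n+1)+0 = n+1 by ring,
    show (n+1)+0+1 = (n+1)+1 by ring,
    Nat.choose_succ_succ' (2*n+1) n, Nat.choose_succ_succ' (2*n+1) (n+1), hsym,
    Nat.choose_succ_succ' (2*n) n, Nat.choose_succ_succ' (2*n) (n+1),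
    show n+2 = (n+1)+1 from rfl]
  push_cast
  ring

lemma four_cos_sq_sin (θ x : ℝ) :
    4 * Real.cos θ ^ 2 * Real.sin x
      = 2 * Real.sin x + Real.sin (x + 2*θ) + Real.sin (x - 2*θ) := by
  rw [Real.sin_add, Real.sin_sub, Real.cos_two_mul]
  ring

lemma sum_step (n : ℕ) (c s t d : ℕ → ℝ)
    (h0 : t 0 = - s 0) (hts : ∀ k, t (k+1) = s k)
    (hc : ∀ j, n < j → c j = 0)
    (hd0 : d 0 = c 0 + c 1) (hds : ∀ k, d (k+1) = c k + 2 * c (k+1) + c (k+2)) :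
    ∑ k ∈ Finset.range (n+1), (2*(c k * s k) + c k * s (k+1) + c k * t k)
      = ∑ k ∈ Finset.range (n+2), d k * s k := by
  have A : ∑ k ∈ range (n+1), (2*(c k * s k) + c k * s (k+1) + c k * t k)
      = 2 * ∑ k ∈ range (n+1), c k * s k + ∑ k ∈ range (n+1), c k * s (k+1)
        + ∑ k ∈ range (n+1), c k * t k := by
    rw [Finset.mul_sum, ← Finset.sum_add_distrib, ← Finset.sum_add_distrib]
  have hT : ∑ k ∈ range (n+1), c k * t k
      = (∑ k ∈ range n, c (k+1) * s k) - c 0 * s 0 := by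
    rw [Finset.sum_range_succ']
    simp only [hts, h0]
    ring
  have hR : ∑ k ∈ range (n+2), d k * s k
      = (∑ k ∈ range (n+1), c k * s (k+1))
        + 2 * (∑ k ∈ range (n+1), c (k+1) * s (k+1))
        + (∑ k ∈ range (n+1), c (k+2) * s (k+1))
        + (c 0 + c 1) * s 0 := by
    rw [Finset.sum_range_succ']
    simp only [hds, hd0]
    rw [Finset.mul_sum, ← Finset.sum_add_distrib, ← Finset.sum_add_distrib]
    congr 1
    exact Finset.sum_congr rfl (fun k _ => by ring)
  have h1 : ∑ k ∈ range (n+1), c k * s k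
      = (∑ k ∈ range n, c (k+1) * s (k+1)) + c 0 * s 0 := by
    rw [Finset.sum_range_succ']
  have h2 : ∑ k ∈ range (n+1), c (k+1) * s (k+1)
      = ∑ k ∈ range n, c (k+1) * s (k+1) := by
    rw [Finset.sum_range_succ, hc (n+1) (by omega)]
    ring
  have h4 : ∑ k ∈ range n, c (k+1) * s k
      = (∑ k ∈ range (n+1), c (k+2) * s (k+1)) + c 1 * s 0 := by
    cases n with
    | zero => simp [hc 1 (by omega), hc 2 (by omega)]
    | succ m =>
      rw [Finset.sum_range_succ', Finset.sum_range_succ, Finset.sum_range_succ,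
        hc (m+1+2) (by omega), hc (m+2) (by omega)]
      simp [add_assoc]
  rw [A, hT, hR, h1, h2, h4]
  ring

lemma key (n : ℕ) (θ : ℝ) :
    (2 * Real.cos θ) ^ (2*n) * Real.sin θ =
      ∑ k ∈ Finset.range (n+1), bcoef n k * Real.sin ((2*k+1) * θ) := by
  induction n with
  | zero => simp [bcoef]
  | succ n ih =>
    have h2 : (2*Real.cos θ)^(2*(n+1)) * Real.sin θ
        = 4 * Real.cos θ^2 * ((2*Real.cos θ)^(2*n) * Real.sin θ) := by ring
    rw [h2, ih, Finset.mul_sum]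
    have hterm : ∀ k ∈ range (n+1),
        4*Real.cos θ^2*(bcoef n k * Real.sin ((2*(k:ℝ)+1)*θ))
        = 2*(bcoef n k * Real.sin ((2*(k:ℝ)+1)*θ))
          + bcoef n k * Real.sin ((2*((k+1:ℕ):ℝ)+1)*θ)
          + bcoef n k * Real.sin ((2*(k:ℝ)+1)*θ - 2*θ) := by
      intro k _
      have harg : (2*(k:ℝ)+1)*θ + 2*θ = (2*((k+1:ℕ):ℝ)+1)*θ := by push_cast; ring
      rw [show 4*Real.cos θ^2*(bcoef n k * Real.sin ((2*(k:ℝ)+1)*θ))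
          = bcoef n k * (4*Real.cos θ^2*Real.sin ((2*(k:ℝ)+1)*θ)) from by ring,
        four_cos_sq_sin θ ((2*(k:ℝ)+1)*θ), harg]
      ring
    rw [Finset.sum_congr rfl hterm]
    exact sum_step n (bcoef n) (fun k => Real.sin ((2*(k:ℝ)+1)*θ))
      (fun k => Real.sin ((2*(k:ℝ)+1)*θ - 2*θ)) (bcoef (n+1))
      (by push_cast; ring_nf; simp [Real.sin_neg])
      (fun k => by push_cast; ring_nf)
      (fun j hj => bcoef_zero n j hj)
      (bcoef_pascal_zero n)
      (fun k => bcoef_pascal n k)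

lemma nat_coef (n a : ℕ) :
    (2*n+1) * Nat.choose (2*n) a = Nat.choose (2*n+1) a * (2*n+1-a) := by
  have h1 := Nat.add_one_mul_choose_eq (2*n) a
  have h2 := Nat.choose_succ_right_eq (2*n+1) a
  omega

lemma nat_coef2 (n a : ℕ) (ha : 1 ≤ a) :
    (2*n+1) * Nat.choose (2*n) (a-1) = Nat.choose (2*n+1) a * a := by
  obtain ⟨b, rfl⟩ : ∃ b, a = b+1 := ⟨a-1, by omega⟩
  simpa [Nat.succ_eq_add_one, mul_comm] using Nat.add_one_mul_choose_eq (2*n) b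

lemma coef_eq (n k : ℕ) (hk : k ≤ n) :
    ((2*(k:ℝ)+1)/(2*(n:ℝ)+1)) * (Nat.choose (2*n+1) (n-k) : ℝ) = bcoef n k := by
  have hn : (2*(n:ℝ)+1) ≠ 0 := by positivity
  rw [div_mul_eq_mul_div, div_eq_iff hn]
  unfold bcoef
  have hsymm1 : Nat.choose (2*n) (n+k) = Nat.choose (2*n) (n-k) := by
    rw [← Nat.choose_symm (by omega : n+k ≤ 2*n)]
    congr 1; omega
  rcases Nat.lt_or_ge k n with hlt | hge
  · -- k < n
    have hsymm2 : Nat.choose (2*n) (n+k+1) = Nat.choose (2*n) (n-k-1) := by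
      rw [← Nat.choose_symm (by omega : n+k+1 ≤ 2*n)]
      congr 1; omega
    have c1 := nat_coef n (n-k)
    have c2 := nat_coef2 n (n-k) (by omega)
    have c1' : (2*(n:ℝ)+1) * (Nat.choose (2*n) (n-k) : ℝ)
        = (Nat.choose (2*n+1) (n-k) : ℝ) * ((n:ℝ)+(k:ℝ)+1) := by
      have := congrArg (fun x : ℕ => (x:ℝ)) c1
      push_cast at this
      rw [this]
      have : ((2*n+1-(n-k) : ℕ) : ℝ) = (n:ℝ)+(k:ℝ)+1 := by
        have : 2*n+1-(n-k) = n+k+1 := by omega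
        rw [this]; push_cast; ring
      rw [this]
    have c2' : (2*(n:ℝ)+1) * (Nat.choose (2*n) (n-k-1) : ℝ)
        = (Nat.choose (2*n+1) (n-k) : ℝ) * ((n:ℝ)-(k:ℝ)) := by
      have := congrArg (fun x : ℕ => (x:ℝ)) c2
      push_cast at this
      rw [this]
      have : ((n-k : ℕ) : ℝ) = (n:ℝ)-(k:ℝ) := by
        rw [Nat.cast_sub hk]
      rw [this]
    rw [hsymm1, hsymm2]
    linear_combination c2' - c1'
  · -- k = n
    have hkn : k = n := by omega
    subst hkn
    rw [Nat.sub_self, Nat.choose_zero_right, show k+k = 2*k by ring,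
      Nat.choose_self, Nat.choose_eq_zero_of_lt (by omega : 2*k < 2*k+1)]
    push_cast
    ring

theorem cos_even_power_catalan (n : ℕ) (θ : ℝ) (h : Real.sin θ ≠ 0) :
    (2 : ℝ) ^ (2 * n) * Real.cos θ ^ (2 * n) =
      ∑ k ∈ Finset.range (n + 1),
        ((2 * k + 1 : ℝ) / (2 * n + 1)) * (Nat.choose (2 * n + 1) (n - k) : ℝ) *
          (Real.sin ((2 * k + 1) * θ) / Real.sin θ) := by
  have hkey := key n θ
  calc (2:ℝ)^(2*n) * Real.cos θ^(2*n)
      = (2*Real.cos θ)^(2*n) := by rw [mul_pow]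
    _ = (2*Real.cos θ)^(2*n) * Real.sin θ / Real.sin θ := by field_simp
    _ = (∑ k ∈ range (n+1), bcoef n k * Real.sin ((2*k+1)*θ)) / Real.sin θ := by
        rw [hkey]
    _ = ∑ k ∈ range (n+1), bcoef n k * (Real.sin ((2*k+1)*θ) / Real.sin θ) := by
        rw [Finset.sum_div]
        exact Finset.sum_congr rfl (fun k _ => by ring)
    _ = _ := by
        refine Finset.sum_congr rfl (fun k hk => ?_)
        rw [coef_eq n k (by simp at hk; omega)]
end

section
/- For every integer n ≥ 1 and real θ with sin θ ≠ 0, 2^{2n-1} cos^{2n-1}(θ) = ∑_{k=1}^{n} (k/n) C(2n, n-k) · sin(2kθ)/sin(θ). -/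
lemma two_cos_pow (m : ℕ) (θ : ℝ) :
    (2 * Real.cos θ) ^ m =
      ∑ j ∈ Finset.range (m + 1),
        (m.choose j : ℝ) * Real.cos ((2 * (j : ℝ) - (m : ℝ)) * θ) := by
  have key : ((2 * Real.cos θ : ℝ) : ℂ) ^ m =
      ∑ j ∈ Finset.range (m + 1),
        (m.choose j : ℂ) *
          Complex.exp (((2 * (j : ℝ) - (m : ℝ)) * θ : ℝ) * Complex.I) := by
    have h2 : ((2 * Real.cos θ : ℝ) : ℂ) =
        Complex.exp ((θ : ℂ) * Complex.I) + Complex.exp (-(θ : ℂ) * Complex.I) := by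
      rw [Complex.exp_mul_I, Complex.exp_mul_I]
      push_cast
      simp [Complex.cos_neg, Complex.sin_neg]
      ring
    rw [h2, add_pow]
    refine Finset.sum_congr rfl fun j hj => ?_
    have hj' : j ≤ m := Nat.lt_succ_iff.mp (Finset.mem_range.mp hj)
    rw [← Complex.exp_nat_mul, ← Complex.exp_nat_mul, ← Complex.exp_add]
    have harg : (j : ℂ) * ((θ : ℂ) * Complex.I) + ((m - j : ℕ) : ℂ) * (-(θ : ℂ) * Complex.I)
        = (((2 * (j : ℝ) - (m : ℝ)) * θ : ℝ) : ℂ) * Complex.I := by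
      push_cast [hj']
      ring
    rw [harg]
    ring
  calc (2 * Real.cos θ) ^ m = (((2 * Real.cos θ : ℝ) : ℂ) ^ m).re := by
        rw [← Complex.ofReal_pow, Complex.ofReal_re]
    _ = _ := by
        rw [key, Complex.re_sum]
        refine Finset.sum_congr rfl fun j _ => ?_
        simp only [Complex.mul_re, Complex.natCast_re, Complex.natCast_im,
          Complex.exp_ofReal_mul_I_re, zero_mul, sub_zero]

lemma two_cos_pow_odd (n : ℕ) (hn : 1 ≤ n) (θ : ℝ) :
    (2 * Real.cos θ) ^ (2 * n - 1) =
      ∑ k ∈ Finset.Icc 1 n,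
        ((2 * n - 1).choose (n - k) : ℝ) * (2 * Real.cos ((2 * (k : ℝ) - 1) * θ)) := by
  rw [two_cos_pow, show 2 * n - 1 + 1 = 2 * n from by omega]
  set f : ℕ → ℝ := fun j => ((2 * n - 1).choose j : ℝ) *
      Real.cos ((2 * (j : ℝ) - ((2 * n - 1 : ℕ) : ℝ)) * θ) with hf
  have h2 : ∑ i ∈ Finset.Ico n (2 * n), f i = ∑ i ∈ Finset.range n, f (n + i) := by
    rw [Finset.sum_Ico_eq_sum_range, show 2 * n - n = n from by omega]
  have hsplit : ∑ j ∈ Finset.range (2 * n), f j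
      = ∑ i ∈ Finset.range n, f i + ∑ i ∈ Finset.range n, f (n + i) := by
    rw [Finset.range_eq_Ico, ← Finset.sum_Ico_consecutive _ (Nat.zero_le n) (by omega : n ≤ 2 * n),
      ← Finset.range_eq_Ico, h2]
  rw [hsplit, ← Finset.sum_range_reflect (fun i => f (n + i)) n, ← Finset.sum_add_distrib]
  rw [← Finset.Ico_add_one_right_eq_Icc, Finset.sum_Ico_eq_sum_range, show n + 1 - 1 = n from by omega]
  rw [← Finset.sum_range_reflect (fun i => ((2 * n - 1).choose (n - (1 + i)) : ℝ) *
      (2 * Real.cos ((2 * ((1 + i : ℕ) : ℝ) - 1) * θ))) n]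
  refine Finset.sum_congr rfl fun i hi => ?_
  have hi' : i < n := Finset.mem_range.mp hi
  have e1 : n + (n - 1 - i) = 2 * n - 1 - i := by omega
  have e2 : n - (1 + (n - 1 - i)) = i := by omega
  have e3 : 1 + (n - 1 - i) = n - i := by omega
  have e4 : (2 * n - 1).choose (2 * n - 1 - i) = (2 * n - 1).choose i := by
    exact Nat.choose_symm (by omega)
  simp only [hf, e1, e2, e3, e4]
  have c1 : ((2 * n - 1 - i : ℕ) : ℝ) = 2 * n - 1 - i := by
    push_cast [Nat.cast_sub (show i ≤ 2*n-1 by omega), Nat.cast_sub (show 1 ≤ 2*n by omega)]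
    ring
  have c2 : ((2 * n - 1 : ℕ) : ℝ) = 2 * n - 1 := by
    push_cast [Nat.cast_sub (show 1 ≤ 2*n by omega)]; ring
  have c3 : ((n - i : ℕ) : ℝ) = n - i := by
    push_cast [Nat.cast_sub (show i ≤ n by omega)]; ring
  rw [c1, c2, c3]
  have harg1 : (2 * ((2:ℝ) * n - 1 - i) - (2 * n - 1)) * θ = (2 * n - 1 - 2 * i) * θ := by ring
  have harg2 : (2 * (i:ℝ) - (2 * n - 1)) * θ = -((2 * n - 1 - 2 * i) * θ) := by ring
  have harg3 : (2 * ((n:ℝ) - i) - 1) * θ = (2 * n - 1 - 2 * i) * θ := by ring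
  rw [harg1, harg2, harg3, Real.cos_neg, show n - (n - i) = i from by omega]
  ring

lemma abel_sum (c S : ℕ → ℝ) (h0 : S 0 = 0) (n : ℕ) :
    ∑ k ∈ Finset.Icc 1 n, c k * (S k - S (k - 1)) =
      ∑ k ∈ Finset.Icc 1 n, (c k - c (k + 1)) * S k + c (n + 1) * S n := by
  induction n with
  | zero => simp [h0]
  | succ m ih =>
      rw [Finset.sum_Icc_succ_top (by omega : 1 ≤ m + 1),
        Finset.sum_Icc_succ_top (by omega : 1 ≤ m + 1), ih,
        show m + 1 - 1 = m from rfl]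
      ring

lemma coeff_eq (n k : ℕ) (hn : 1 ≤ n) (hk1 : 1 ≤ k) (hkn : k ≤ n) :
    ((k : ℝ) / n) * ((2 * n).choose (n - k) : ℝ) =
      ((2 * n - 1).choose (n - k) : ℝ) -
        (if k + 1 ≤ n then (((2 * n - 1).choose (n - (k + 1)) : ℝ)) else 0) := by
  have hn0 : (n : ℝ) ≠ 0 := Nat.cast_ne_zero.mpr (by omega)
  rcases eq_or_lt_of_le hkn with rfl | hlt
  · rw [if_neg (by omega)]
    simp [Nat.sub_self, div_self hn0]
  · rw [if_pos (by omega)]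
    set j := n - k with hj
    have hj1 : 1 ≤ j := by omega
    have hjn : j < n := by omega
    have e2 : n - (k + 1) = j - 1 := by omega
    rw [e2]
    have hpascal : (2 * n).choose j = (2 * n - 1).choose (j - 1) + (2 * n - 1).choose j := by
      have h := Nat.choose_succ_succ (2 * n - 1) (j - 1)
      simp only [Nat.succ_eq_add_one] at h
      conv_lhs => rw [show 2 * n = (2 * n - 1) + 1 from by omega,
        show j = (j - 1) + 1 from by omega]
      rw [h, show j - 1 + 1 = j from by omega]
    have hratio : (2 * n - 1).choose j * j = (2 * n - 1).choose (j - 1) * (2 * n - j) := by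
      have h := Nat.choose_succ_right_eq (2 * n - 1) (j - 1)
      rw [show j - 1 + 1 = j from by omega] at h
      rw [h, show 2 * n - 1 - (j - 1) = 2 * n - j from by omega]
    have hpr : (((2 * n).choose j : ℕ) : ℝ)
        = ((2 * n - 1).choose (j - 1) : ℝ) + ((2 * n - 1).choose j : ℝ) := by
      exact_mod_cast hpascal
    have hcast : (2 * (n : ℝ) - j) = ((2 * n - j : ℕ) : ℝ) := by
      push_cast [Nat.cast_sub (show j ≤ 2 * n from by omega)]; ring
    have hrr : ((2 * n - 1).choose j : ℝ) * j
        = ((2 * n - 1).choose (j - 1) : ℝ) * (2 * (n : ℝ) - j) := by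
      rw [hcast]; exact_mod_cast hratio
    have hkr : (k : ℝ) = n - j := by
      push_cast [hj, Nat.cast_sub hkn]
      ring
    rw [hpr, hkr]
    field_simp
    linear_combination -hrr

theorem cos_odd_power_catalan (n : ℕ) (hn : 1 ≤ n) (θ : ℝ) (h : Real.sin θ ≠ 0) :
    (2 : ℝ) ^ (2 * (n : ℤ) - 1) * Real.cos θ ^ (2 * n - 1) =
      ∑ k ∈ Finset.Icc 1 n,
        ((k : ℝ) / n) * (Nat.choose (2 * n) (n - k) : ℝ) *
          (Real.sin (2 * k * θ) / Real.sin θ) := by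
  have hsq : (2 : ℝ) ^ (2 * (n : ℤ) - 1) = (2 : ℝ) ^ (2 * n - 1 : ℕ) := by
    rw [show (2 * (n : ℤ) - 1) = ((2 * n - 1 : ℕ) : ℤ) from by omega, zpow_natCast]
  rw [hsq, ← mul_pow]
  set c : ℕ → ℝ := fun k => if k ≤ n then ((2 * n - 1).choose (n - k) : ℝ) else 0 with hc
  set S : ℕ → ℝ := fun k => Real.sin (2 * (k : ℝ) * θ) with hS
  have h0 : S 0 = 0 := by simp [hS]
  have key : (2 * Real.cos θ) ^ (2 * n - 1) * Real.sin θ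
      = ∑ k ∈ Finset.Icc 1 n,
          ((k : ℝ) / n) * ((2 * n).choose (n - k) : ℝ) * S k := by
    have step1 : (2 * Real.cos θ) ^ (2 * n - 1) * Real.sin θ
        = ∑ k ∈ Finset.Icc 1 n, c k * (S k - S (k - 1)) := by
      rw [two_cos_pow_odd n hn θ, Finset.sum_mul]
      refine Finset.sum_congr rfl fun k hk => ?_
      obtain ⟨hk1, hkn⟩ := Finset.mem_Icc.mp hk
      simp only [hc, hS, if_pos hkn]
      have hks : ((k - 1 : ℕ) : ℝ) = (k : ℝ) - 1 := by
        push_cast [Nat.cast_sub hk1]; ring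
      rw [hks, Real.sin_sub_sin,
        show (2 * (k:ℝ) * θ - 2 * ((k:ℝ) - 1) * θ) / 2 = θ from by ring,
        show (2 * (k:ℝ) * θ + 2 * ((k:ℝ) - 1) * θ) / 2 = (2 * (k:ℝ) - 1) * θ from by ring]
      ring
    rw [step1, abel_sum c S h0 n]
    have hend : c (n + 1) = 0 := by
      simp only [hc]
      rw [if_neg (by omega)]
    rw [hend, zero_mul, add_zero]
    refine Finset.sum_congr rfl fun k hk => ?_
    obtain ⟨hk1, hkn⟩ := Finset.mem_Icc.mp hk
    have hco := coeff_eq n k hn hk1 hkn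
    simp only [hc, if_pos hkn]
    rw [← hco]
  calc (2 * Real.cos θ) ^ (2 * n - 1)
      = ((2 * Real.cos θ) ^ (2 * n - 1) * Real.sin θ) / Real.sin θ := by
        rw [mul_div_cancel_right₀ _ h]
    _ = (∑ k ∈ Finset.Icc 1 n,
          ((k : ℝ) / n) * ((2 * n).choose (n - k) : ℝ) * S k) / Real.sin θ := by rw [key]
    _ = _ := by
        rw [Finset.sum_div]
        refine Finset.sum_congr rfl fun k hk => ?_
        rw [hS, mul_div_assoc]
end

section
/- For all integers k, l ≥ 1, the super Catalan number (2k)!·(2l)! / (k!·l!·(k+l)!) is a positive integer. -/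
/-!
The super Catalan numbers satisfy `4 S(k, l) = S(k + 1, l) + S(k, l + 1)` and `S(k, 0)` is the
central binomial coefficient `C(2k, k)`. Taking these as a recursive definition of an integer
`S(k, l)`, an induction on `l` shows `S(k, l) · k! l! (k + l)! = (2k)! (2l)!`, so the quotient is an
integer, and it is positive because both factorial products are.
-/

open Nat

def superCatalan : ℕ → ℕ → ℤ
  | k, 0 => k.centralBinom
  | k, l + 1 => 4 * superCatalan k l - superCatalan (k + 1) l

lemma centralBinom_mul_factorial_mul_factorial (k : ℕ) :
    k.centralBinom * (k ! * k !) = (2 * k)! := by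
  rw [← mul_assoc, centralBinom_eq_two_mul_choose, two_mul,
    add_choose_mul_factorial_mul_factorial]

lemma factorial_two_mul_succ (n : ℕ) : (2 * (n + 1))! = (2 * n + 2) * (2 * n + 1) * (2 * n)! := by
  rw [show 2 * (n + 1) = 2 * n + 1 + 1 by ring, factorial_succ, factorial_succ, mul_assoc]

theorem superCatalan_mul_factorials (k l : ℕ) :
    superCatalan k l * (k ! * l ! * (k + l)! : ℕ) = ((2 * k)! * (2 * l)! : ℕ) := by
  induction l generalizing k with
  | zero =>
    simp only [superCatalan, factorial_zero, add_zero, mul_one, mul_zero]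
    exact_mod_cast centralBinom_mul_factorial_mul_factorial k
  | succ l ih =>
    have ih_k := ih k
    have ih_succ := ih (k + 1)
    rw [show k + 1 + l = k + l + 1 by ring] at ih_succ
    push_cast [factorial_succ, factorial_two_mul_succ, ← add_assoc] at ih_k ih_succ ⊢
    have ih_succ' : superCatalan (k + 1) l * ((k + l + 1) * (k ! * l ! * (k + l)!)) =
        2 * (2 * k + 1) * ((2 * k)! * (2 * l)!) := by
      apply mul_left_cancel₀ (show ((k : ℤ) + 1) ≠ 0 by positivity)
      linear_combination ih_succ
    simp only [superCatalan]
    linear_combination (4 * (l + 1) * (k + l + 1) : ℤ) * ih_k - (l + 1 : ℤ) * ih_succ'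

theorem superCatalan_pos (k l : ℕ) : 0 < superCatalan k l := by
  have hD : (0 : ℤ) < (k ! * l ! * (k + l)! : ℕ) := by positivity
  have hN : (0 : ℤ) < ((2 * k)! * (2 * l)! : ℕ) := by positivity
  rw [← superCatalan_mul_factorials] at hN
  exact (mul_pos_iff_of_pos_right hD).mp hN

theorem superCatalan_pos_integer_general (k l : ℕ) :
    ∃ c : ℕ, 0 < c ∧
      Nat.factorial (2 * k) * Nat.factorial (2 * l) =
        c * (Nat.factorial k * Nat.factorial l * Nat.factorial (k + l)) := by
  have hpos := superCatalan_pos k l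
  refine ⟨(superCatalan k l).toNat, by omega, ?_⟩
  zify
  rw [Int.toNat_of_nonneg hpos.le]
  exact_mod_cast (superCatalan_mul_factorials k l).symm

theorem superCatalan_pos_integer (k l : ℕ) (hk : 1 ≤ k) (hl : 1 ≤ l) :
    ∃ c : ℕ, 0 < c ∧
      Nat.factorial (2 * k) * Nat.factorial (2 * l) =
        c * (Nat.factorial k * Nat.factorial l * Nat.factorial (k + l)) :=
  superCatalan_pos_integer_general k l
end

section
/- For all integers k, l ≥ 1, (2k)!·(2l)!/(k!·l!·(k+l)!) = C(k+l-1, l)·C(2(k+l), k+l) / C(2(k+l)-1, 2l). -/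
theorem superCatalan_eq_ratio (k l : ℕ) (hk : 1 ≤ k) (hl : 1 ≤ l) :
    (Nat.factorial (2 * k) : ℝ) * (Nat.factorial (2 * l) : ℝ) /
        ((Nat.factorial k : ℝ) * (Nat.factorial l : ℝ) * (Nat.factorial (k + l) : ℝ)) =
      (Nat.choose (k + l - 1) l : ℝ) * (Nat.choose (2 * (k + l)) (k + l) : ℝ) /
        (Nat.choose (2 * (k + l) - 1) (2 * l) : ℝ) := by
  obtain ⟨a, rfl⟩ := Nat.exists_eq_add_of_le hk
  obtain ⟨b, rfl⟩ := Nat.exists_eq_add_of_le hl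
  have h1 : (1 + a) + (1 + b) - 1 = 1 + a + b := by omega
  have h2 : 2 * ((1 + a) + (1 + b)) - 1 = 2*a + 2*b + 3 := by omega
  rw [h1, h2]
  rw [Nat.cast_choose ℝ (show 1 + b ≤ 1 + a + b by omega),
      Nat.cast_choose ℝ (show (1+a)+(1+b) ≤ 2*((1+a)+(1+b)) by omega),
      Nat.cast_choose ℝ (show 2*(1+b) ≤ 2*a+2*b+3 by omega)]
  have e1 : 1 + a + b - (1 + b) = a := by omega
  have e2 : 2*((1+a)+(1+b)) - ((1+a)+(1+b)) = a+b+2 := by omega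
  have e3 : 2*a+2*b+3 - 2*(1+b) = 2*a+1 := by omega
  rw [e1, e2, e3]
  rw [show 2*((1+a)+(1+b)) = (2*a+2*b+3)+1 by ring,
      show 2*(1+a) = (2*a+1)+1 by ring,
      show 2*(1+b) = (2*b+1)+1 by ring,
      show (1+a)+(1+b) = (a+b+1)+1 by ring,
      show 1+a = a+1 by ring,
      show 1+b = b+1 by ring,
      show a+1+b = (a+b)+1 by ring,
      show a+b+2 = (a+b+1)+1 by ring]
  rw [Nat.factorial_succ ((2*a+2*b+3)), Nat.factorial_succ (2*a+1), Nat.factorial_succ (2*b+1),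
      Nat.factorial_succ ((a+b+1)), Nat.factorial_succ a, Nat.factorial_succ b,
      Nat.factorial_succ (a+b)]
  have f1 := Nat.factorial_ne_zero a
  have f2 := Nat.factorial_ne_zero b
  have f3 := Nat.factorial_ne_zero (a+b)
  have f4 := Nat.factorial_ne_zero (2*a+1)
  have f5 := Nat.factorial_ne_zero (2*b+1)
  have f6 := Nat.factorial_ne_zero (2*a+2*b+3)
  push_cast
  field_simp
  ring
end
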